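/- arXiv:1604.00371 — 3 statements merged into one kernel-verified Lean document; each statement's English description precedes it below -/
import Mathlib

section
/- Let N : ℕ → ℕ satisfy N(3) = 1 and N(n+1) = (2n - 3) * N(n) for all n ≥ 3. Then for all n ≥ 2, N(n+1) = (2n-2)! / (2^(n-1) * (n-1)!). (This counts labelled skeletons: trees with n+1 labelled leaves and all internal vertices of degree 3.) -/
/-! The recurrence multiplies by the successive odd numbers, so `N (n + 1) = (2n - 3)‼`; and
`(2m)! = (2m)‼ (2m - 1)‼ = 2^m m! (2m - 1)‼` turns this double factorial into the stated quotient. -/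

open Nat

theorem Nat.factorial_two_mul_eq (m : ℕ) : (2 * m)! = 2 ^ m * m ! * (2 * m - 1)‼ := by
  cases m with
  | zero => rfl
  | succ k =>
    rw [show 2 * (k + 1) - 1 = 2 * k + 1 by omega, show 2 * (k + 1) = 2 * k + 1 + 1 by ring,
      factorial_eq_mul_doubleFactorial, show 2 * k + 1 + 1 = 2 * (k + 1) by ring,
      doubleFactorial_two_mul]

theorem Nat.doubleFactorial_eq_factorial_div (m : ℕ) :
    (2 * m - 1)‼ = (2 * m)! / (2 ^ m * m !) := by
  rw [factorial_two_mul_eq, Nat.mul_div_cancel_left _ (by positivity)]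

theorem eq_doubleFactorial_of_rec (N : ℕ → ℕ) (h3 : N 3 = 1)
    (hrec : ∀ n : ℕ, 3 ≤ n → N (n + 1) = (2 * n - 3) * N n) (m : ℕ) :
    N (m + 3) = (2 * m + 1)‼ := by
  induction m with
  | zero => exact h3
  | succ k ih =>
    rw [hrec (k + 3) (by omega), ih, show 2 * (k + 1) + 1 = 2 * k + 1 + 2 by ring,
      doubleFactorial_add_two, show 2 * (k + 3) - 3 = 2 * k + 1 + 2 by omega]

theorem stmt_8 (N : ℕ → ℕ) (h3 : N 3 = 1)
    (hrec : ∀ n : ℕ, 3 ≤ n → N (n + 1) = (2 * n - 3) * N n) :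
    ∀ n : ℕ, 2 ≤ n →
      N (n + 1) = (2 * n - 2).factorial / (2 ^ (n - 1) * (n - 1).factorial) := by
  intro n hn
  obtain ⟨m, rfl⟩ : ∃ m, n = m + 2 := ⟨n - 2, by omega⟩
  rw [eq_doubleFactorial_of_rec N h3 hrec m, show 2 * (m + 2) - 2 = 2 * (m + 1) by omega,
    show m + 2 - 1 = m + 1 by omega, ← doubleFactorial_eq_factorial_div,
    show 2 * (m + 1) - 1 = 2 * m + 1 by omega]
end

section
/- Let (b_n)_{n≥2} be a sequence of nonnegative real numbers satisfying b_{m+n+3} ≤ b_m + b_n for all m, n ≥ 2. Then the limit lim_{n→∞} b_n / n exists and equals inf_{n≥2} b_n / n. -/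
/-!
Fix `k ≥ a`. Iterating the hypothesis gives `b (r + q (k + s)) ≤ b r + q b k`, and every
`n ≥ a` is of this form with `r` in the finite window `[a, a + k + s]`, on which `b` is
bounded. Hence `b n / n ≤ M / n + b k / (k + s)`, so `limsup b n / n ≤ b k / k` for every
`k ≥ a`.
-/

open Filter Topology

namespace ShiftedSubadditive

variable {a s : ℕ} {b : ℕ → ℝ}
  (hsub : ∀ m n : ℕ, a ≤ m → a ≤ n → b (m + n + s) ≤ b m + b n)
include hsub

theorem le_add_mul {k : ℕ} (hk : a ≤ k) (q : ℕ) {r : ℕ} (hr : a ≤ r) :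
    b (r + q * (k + s)) ≤ b r + q * b k := by
  induction q with
  | zero => simp
  | succ q ih =>
    have hstep := hsub (r + q * (k + s)) k (hr.trans (Nat.le_add_right _ _)) hk
    rw [show r + (q + 1) * (k + s) = r + q * (k + s) + k + s by ring]
    push_cast
    linarith

theorem exists_le_add_mul_div {k : ℕ} (hk : a ≤ k) (hks : 0 < k + s) (hbk : 0 ≤ b k) :
    ∃ M : ℝ, ∀ n, a ≤ n → b n ≤ M + n * (b k / (k + s)) := by
  obtain ⟨M, hM⟩ := ((Set.finite_Icc a (a + k + s)).image b).bddAbove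
  refine ⟨M, fun n hn => ?_⟩
  set q := (n - a) / (k + s)
  set r := a + (n - a) % (k + s)
  have hn_eq : n = r + q * (k + s) := by
    have := Nat.mod_add_div (n - a) (k + s)
    simp only [r, q]
    rw [mul_comm]
    omega
  have hr : r ≤ a + k + s := by
    have := Nat.mod_lt (n - a) hks
    omega
  have hbr : b r ≤ M := hM ⟨r, ⟨Nat.le_add_right _ _, hr⟩, rfl⟩
  have hq : (q : ℝ) * (k + s) ≤ n := by
    rw [hn_eq]
    push_cast
    linarith [(Nat.cast_nonneg r : (0 : ℝ) ≤ r)]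
  have hks' : (0 : ℝ) < k + s := by exact_mod_cast hks
  have hqb : (q : ℝ) * b k ≤ n * (b k / (k + s)) := by
    rw [← mul_div_assoc, le_div_iff₀ hks']
    linarith [mul_le_mul_of_nonneg_right hq hbk]
  calc b n = b (r + q * (k + s)) := by rw [← hn_eq]
    _ ≤ b r + q * b k := le_add_mul hsub hk q (Nat.le_add_right _ _)
    _ ≤ M + n * (b k / (k + s)) := by linarith

theorem eventually_div_lt {k : ℕ} (hk : a ≤ k) (hks : 0 < k + s) (hbk : 0 ≤ b k) {c : ℝ}
    (hc : b k / (k + s) < c) : ∀ᶠ n : ℕ in atTop, b n / n < c := by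
  obtain ⟨M, hM⟩ := exists_le_add_mul_div hsub hk hks hbk
  have hlim : Tendsto (fun n : ℕ => M / n + b k / (k + s)) atTop (𝓝 (b k / (k + s))) := by
    simpa using (tendsto_const_div_atTop_nhds_zero_nat M).add_const (b k / (k + s))
  filter_upwards [hlim.eventually (gt_mem_nhds hc), eventually_ge_atTop (max a 1)]
    with n hlt hn
  have hn_pos : (0 : ℝ) < n := by exact_mod_cast (le_of_max_le_right hn)
  calc b n / n ≤ (M + n * (b k / (k + s))) / n := by
        gcongr
        exact hM n (le_of_max_le_left hn)
    _ = M / n + b k / (k + s) := by field_simp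
    _ < c := hlt

theorem tendsto_div_iInf (ha : 0 < a) (hnn : ∀ n, a ≤ n → 0 ≤ b n) :
    Tendsto (fun n : ℕ => b n / n) atTop
      (𝓝 (⨅ n : {n : ℕ // a ≤ n}, b n / (n : ℕ))) := by
  have : Nonempty {n : ℕ // a ≤ n} := ⟨⟨a, le_rfl⟩⟩
  have hbdd : BddBelow (Set.range fun n : {n : ℕ // a ≤ n} => b n / (n : ℕ)) :=
    ⟨0, by rintro _ ⟨n, rfl⟩; exact div_nonneg (hnn n n.2) (Nat.cast_nonneg _)⟩
  refine tendsto_order.2 ⟨fun c hc => ?_, fun c hc => ?_⟩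
  · filter_upwards [eventually_ge_atTop a] with n hn
    exact hc.trans_le (ciInf_le hbdd ⟨n, hn⟩)
  · obtain ⟨⟨k, hk⟩, hkc⟩ := exists_lt_of_ciInf_lt hc
    have hk_pos : (0 : ℝ) < k := by exact_mod_cast ha.trans_le hk
    refine eventually_div_lt hsub hk (by omega) (hnn k hk) (lt_of_le_of_lt ?_ hkc)
    have hs : (0 : ℝ) ≤ s := Nat.cast_nonneg s
    exact div_le_div_of_nonneg_left (hnn k hk) hk_pos (by linarith)

end ShiftedSubadditive

theorem stmt_9 (b : ℕ → ℝ) (hnn : ∀ n : ℕ, 2 ≤ n → 0 ≤ b n)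
    (hsub : ∀ m n : ℕ, 2 ≤ m → 2 ≤ n → b (m + n + 3) ≤ b m + b n) :
    Filter.Tendsto (fun n : ℕ => b n / n) Filter.atTop
      (nhds (⨅ n : {n : ℕ // 2 ≤ n}, b n / (n : ℕ))) :=
  ShiftedSubadditive.tendsto_div_iInf hsub two_pos hnn
end

section
/- Let G be a connected graph (possibly infinite) and let W be a nonempty finite set of vertices of G. Then there exists a vertex w ∈ W such that all vertices of W \ {w} lie in a single connected component of the graph obtained from G by deleting w and all edges incident to w. -/
/-!
Fix `r ∈ W` and let `w ∈ W` be a vertex of `W` farthest from `r`. Every vertex on a shortest walk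
from `r` to `u` other than `u` is strictly closer to `r` than `u`, so for `u ∈ W \ {w}` a shortest
walk from `r` to `u` avoids `w`. Gluing two such walks joins any two vertices of `W \ {w}` in
`G - w`.
-/

namespace SimpleGraph

variable {V : Type*} {G : SimpleGraph V}

lemma Walk.dist_lt_of_mem_support_of_length_eq_dist {r u w : V} {p : G.Walk r u}
    (hp : p.length = G.dist r u) (hw : w ∈ p.support) (hwu : w ≠ u) :
    G.dist r w < G.dist r u := by
  classical
  exact hp ▸ (dist_le _).trans_lt (p.length_takeUntil_lt_length hw hwu)

end SimpleGraph

open SimpleGraph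

theorem stmt_10 {V : Type*} (G : SimpleGraph V) (hG : G.Connected)
    (W : Finset V) (hW : W.Nonempty) :
    ∃ w ∈ W, ∀ u ∈ W, ∀ v ∈ W, (hu : u ≠ w) → (hv : v ≠ w) →
      (G.induce ({w}ᶜ : Set V)).Reachable ⟨u, hu⟩ ⟨v, hv⟩ := by
  obtain ⟨r, hr⟩ := hW
  obtain ⟨w, hwW, hw_far⟩ := W.exists_max_image (G.dist r) ⟨r, hr⟩
  refine ⟨w, hwW, fun u hu v hv huw hvw => ?_⟩
  obtain ⟨p, hp⟩ := hG.exists_walk_length_eq_dist r u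
  obtain ⟨q, hq⟩ := hG.exists_walk_length_eq_dist r v
  have h_avoid : ∀ x ∈ (p.reverse.append q).support, x ∈ ({w}ᶜ : Set V) := by
    rintro x hx rfl
    rw [Walk.mem_support_append_iff, Walk.support_reverse, List.mem_reverse] at hx
    rcases hx with hx | hx
    · exact (Walk.dist_lt_of_mem_support_of_length_eq_dist hp hx huw.symm).not_ge (hw_far u hu)
    · exact (Walk.dist_lt_of_mem_support_of_length_eq_dist hq hx hvw.symm).not_ge (hw_far v hv)
  exact ⟨(p.reverse.append q).induce _ h_avoid⟩
end
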